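/- Let G be a connected (2t)-regular simple graph on a finite vertex set V, where t ≥ 1. Then there is an injective group homomorphism from Aut(G) into Aut(𝓜₃(G)), and the order of Aut(𝓜₃(G)) equals (2^t · t!)^{|V|} · |Aut(G)|. -/

import Mathlib

open scoped Classical

/-- A *nut graph*: a finite simple graph on at least 2 vertices whose real adjacency
matrix has nullity (kernel dimension) exactly 1 and such that every nonzero vector in
the kernel of the adjacency matrix has all entries nonzero. -/
def SimpleGraph.IsNut {V : Type*} [Fintype V] (G : SimpleGraph V) : Prop :=
  2 ≤ Fintype.card V ∧
  Module.finrank ℝ (LinearMap.ker (Matrix.mulVecLin (G.adjMatrix ℝ))) = 1 ∧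
  ∀ x : V → ℝ, Matrix.mulVecLin (G.adjMatrix ℝ) x = 0 → x ≠ 0 → ∀ v : V, x v ≠ 0

/-- The automorphism group of a simple graph, realised as the subgroup of the
permutations of the vertex set that preserve adjacency (and non-adjacency). -/
def SimpleGraph.autGroup {V : Type*} (G : SimpleGraph V) : Subgroup (Equiv.Perm V) where
  carrier := { σ | ∀ u v : V, G.Adj (σ u) (σ v) ↔ G.Adj u v }
  mul_mem' := by
    intro σ τ hσ hτ u v
    simpa [hσ (τ u) (τ v)] using hτ u v
  one_mem' := by intro u v; rfl
  inv_mem' := by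
    intro σ hσ u v
    have := hσ (σ⁻¹ u) (σ⁻¹ v)
    simpa using this.symm

/-- The triangle-multiplier graph `𝓜₃(G)`: obtained from `G` by fusing a bouquet of `t`
triangles to every vertex of `G`.  Its vertex set is `V ⊕ (V × Fin t × Fin 2)`; vertex `v`
is joined to the two new vertices `(v, j, 0)` and `(v, j, 1)` of each of its `t` triangles,
and these two are joined to each other. -/
def SimpleGraph.triangleMultiplier {V : Type*} (G : SimpleGraph V) (t : ℕ) :
    SimpleGraph (V ⊕ V × Fin t × Fin 2) where
  Adj x y :=
    match x, y with
    | Sum.inl u, Sum.inl v => G.Adj u v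
    | Sum.inl u, Sum.inr p => u = p.1
    | Sum.inr p, Sum.inl u => u = p.1
    | Sum.inr p, Sum.inr q => p.1 = q.1 ∧ p.2.1 = q.2.1 ∧ p.2.2 ≠ q.2.2
  symm := ⟨by
    rintro (u | p) (v | q) h
    · exact G.adj_symm h
    · exact h
    · exact h
    · exact ⟨h.1.symm, h.2.1.symm, h.2.2.symm⟩⟩
  loopless := ⟨by
    rintro (u | p) h
    · exact G.irrefl h
    · exact h.2.2 rfl⟩

/-!
In `𝓜₃(G)` a vertex of `G` has at least three neighbours (one in `G`, since `G` is `2t`-regular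
with `t ≥ 1`, and two in a triangle) while a triangle vertex has exactly two, so an automorphism
`σ` maps `V` onto `V` and restricts to some `τ ∈ Aut(G)`. The triangle vertices at `v`, being
the neighbours of `v` outside `V`, then go to those at `τ v`, by a permutation of `Fin t × Fin 2`
that maps triangles to triangles. Conversely every such datum is an automorphism, so
`Aut(𝓜₃(G)) ≃ Aut(G) × W ^ V`, where `W ≃ Sym(t) × Sym(2) ^ t` has order `t! · 2 ^ t`.
-/

namespace Equiv.Perm

variable {α β : Type*}

def fiberPreserving (α β : Type*) : Subgroup (Perm (α × β)) where
  carrier := {σ | ∀ p q, (σ p).1 = (σ q).1 ↔ p.1 = q.1}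
  mul_mem' hσ hτ p q := (hσ _ _).trans (hτ p q)
  one_mem' _ _ := Iff.rfl
  inv_mem' {σ} hσ p q := by simpa using (hσ (σ⁻¹ p) (σ⁻¹ q)).symm

lemma prodShear_mem_fiberPreserving (τ : Perm α) (ρ : α → Perm β) :
    (τ.prodShear ρ : Perm (α × β)) ∈ fiberPreserving α β :=
  fun _ _ => τ.injective.eq_iff

lemma mem_fiberPreserving_iff_fst_eq_and_snd_ne {σ : Perm (α × β)} :
    σ ∈ fiberPreserving α β ↔
      ∀ p q, (σ p).1 = (σ q).1 ∧ (σ p).2 ≠ (σ q).2 ↔ p.1 = q.1 ∧ p.2 ≠ q.2 := by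
  have sibling (p q : α × β) : p.1 = q.1 ∧ p.2 ≠ q.2 ↔ p.1 = q.1 ∧ p ≠ q := by
    simp only [Ne, Prod.ext_iff]
    tauto
  have fst_eq (p q : α × β) : p.1 = q.1 ↔ p = q ∨ p.1 = q.1 ∧ p ≠ q := by
    constructor
    · tauto
    · rintro (rfl | h) <;> tauto
  refine ⟨fun hσ p q => ?_, fun hσ p q => ?_⟩
  · rw [sibling, sibling, σ.injective.ne_iff, hσ]
  · rw [fst_eq (σ p), fst_eq p, ← sibling, ← sibling, hσ, σ.injective.eq_iff]

lemma exists_prodShear_eq_of_fst_apply {σ : Perm (α × β)} {τ : Perm α}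
    (h : ∀ p, (σ p).1 = τ p.1) : ∃ ρ : α → Perm β, τ.prodShear ρ = σ := by
  have hfib (a : α) (b : β) : σ (a, b) = (τ a, (σ (a, b)).2) := Prod.ext (h _) rfl
  have hbij (a : α) : Function.Bijective fun b => (σ (a, b)).2 := by
    refine ⟨fun b b' hbb' => ?_, fun b' => ?_⟩
    · have := σ.injective ((hfib a b).trans ((congrArg _ hbb').trans (hfib a b').symm))
      exact (Prod.mk.inj this).2
    · obtain ⟨⟨a₀, b₀⟩, hp⟩ : ∃ p, σ p = (τ a, b') := ⟨_, σ.apply_symm_apply _⟩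
      obtain rfl : a₀ = a := τ.injective ((h _).symm.trans (congrArg Prod.fst hp))
      exact ⟨b₀, by simp [hp]⟩
  exact ⟨fun a => Equiv.ofBijective _ (hbij a), Equiv.ext fun p => (hfib p.1 p.2).symm⟩

lemma mem_fiberPreserving_iff_exists_prodShear [Nonempty β] {σ : Perm (α × β)} :
    σ ∈ fiberPreserving α β ↔ ∃ (τ : Perm α) (ρ : α → Perm β), τ.prodShear ρ = σ := by
  refine ⟨fun hσ => ?_, fun ⟨τ, ρ, h⟩ => h ▸ prodShear_mem_fiberPreserving τ ρ⟩
  obtain ⟨b₀⟩ := ‹Nonempty β›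
  have hbij : Function.Bijective fun a => (σ (a, b₀)).1 := by
    refine ⟨fun a a' h => (hσ (a, b₀) (a', b₀)).1 h, fun a' => ?_⟩
    exact ⟨(σ⁻¹ (a', b₀)).1, by simpa using (hσ ((σ⁻¹ (a', b₀)).1, b₀) (σ⁻¹ (a', b₀))).2 rfl⟩
  exact ⟨_, exists_prodShear_eq_of_fst_apply (τ := Equiv.ofBijective _ hbij)
    fun p => (hσ p (p.1, b₀)).2 rfl⟩

lemma prodShear_inj [Nonempty β] {τ τ' : Perm α} {ρ ρ' : α → Perm β} :
    (τ.prodShear ρ : Perm (α × β)) = τ'.prodShear ρ' ↔ τ = τ' ∧ ρ = ρ' := by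
  refine ⟨fun h => ?_, fun ⟨hτ, hρ⟩ => hτ ▸ hρ ▸ rfl⟩
  obtain ⟨b₀⟩ := ‹Nonempty β›
  exact ⟨Equiv.ext fun a => congrArg Prod.fst (Equiv.congr_fun h (a, b₀)),
    funext fun a => Equiv.ext fun b => congrArg Prod.snd (Equiv.congr_fun h (a, b))⟩

lemma sumCongr_prodShear_inj [Nonempty β] {τ τ' : Perm α} {ρ ρ' : α → Perm β} :
    τ.sumCongr (τ.prodShear ρ) = τ'.sumCongr (τ'.prodShear ρ') ↔ τ = τ' ∧ ρ = ρ' := by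
  refine ⟨fun h => ?_, fun ⟨hτ, hρ⟩ => hτ ▸ hρ ▸ rfl⟩
  replace h : sumCongrHom _ _ (τ, τ.prodShear ρ) = sumCongrHom _ _ (τ', τ'.prodShear ρ') := h
  exact prodShear_inj.1 (Prod.ext_iff.1 (sumCongrHom_injective h)).2

noncomputable def prodShearEquivFiberPreserving [Nonempty β] :
    Perm α × (α → Perm β) ≃ fiberPreserving α β :=
  Equiv.ofBijective (fun x => ⟨x.1.prodShear x.2, prodShear_mem_fiberPreserving x.1 x.2⟩)
    ⟨fun x y h => Prod.ext_iff.2 (prodShear_inj.1 (congrArg Subtype.val h)),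
      fun σ => by
        obtain ⟨τ, ρ, h⟩ := mem_fiberPreserving_iff_exists_prodShear.1 σ.2
        exact ⟨(τ, ρ), Subtype.ext h⟩⟩

lemma card_fiberPreserving [Finite α] [Finite β] [Nonempty β] :
    Nat.card (fiberPreserving α β) =
      (Nat.card α).factorial * (Nat.card β).factorial ^ Nat.card α := by
  rw [← Nat.card_congr prodShearEquivFiberPreserving, Nat.card_prod, Nat.card_fun,
    Nat.card_perm, Nat.card_perm]

end Equiv.Perm

namespace SimpleGraph

open Equiv Equiv.Perm Sum Finset

lemma degree_apply_of_mem_autGroup {W : Type*} {H : SimpleGraph W} {σ : Perm W}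
    (hσ : σ ∈ H.autGroup) (w : W) [Fintype (H.neighborSet w)]
    [Fintype (H.neighborSet (σ w))] : H.degree (σ w) = H.degree w :=
  Iso.degree_eq ⟨σ, hσ _ _⟩ w

variable {V : Type*} {G : SimpleGraph V} {t : ℕ}

@[simp] lemma triangleMultiplier_adj_inl_inl {u v : V} :
    (G.triangleMultiplier t).Adj (inl u) (inl v) ↔ G.Adj u v := Iff.rfl

@[simp] lemma triangleMultiplier_adj_inl_inr {u : V} {q : V × Fin t × Fin 2} :
    (G.triangleMultiplier t).Adj (inl u) (inr q) ↔ u = q.1 := Iff.rfl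

@[simp] lemma triangleMultiplier_adj_inr_inl {u : V} {q : V × Fin t × Fin 2} :
    (G.triangleMultiplier t).Adj (inr q) (inl u) ↔ u = q.1 := Iff.rfl

@[simp] lemma triangleMultiplier_adj_inr_inr {p q : V × Fin t × Fin 2} :
    (G.triangleMultiplier t).Adj (inr p) (inr q) ↔ p.1 = q.1 ∧ p.2.1 = q.2.1 ∧ p.2.2 ≠ q.2.2 :=
  Iff.rfl

lemma degree_triangleMultiplier_inr_le [Fintype V] (q : V × Fin t × Fin 2) :
    (G.triangleMultiplier t).degree (inr q) ≤ 2 := by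
  have hsub : (G.triangleMultiplier t).neighborFinset (inr q) ⊆
      {inl q.1, inr (q.1, q.2.1, q.2.2 + 1)} := by
    obtain ⟨v, j, k⟩ := q
    rintro (u | ⟨v', j', k'⟩) h
    · simp_all
    · obtain ⟨rfl, rfl, hk⟩ : v = v' ∧ j = j' ∧ k ≠ k' := by simpa using h
      have : k' = k + 1 := by clear h; revert k k'; decide
      simp [this]
  rw [← card_neighborFinset_eq_degree]
  exact (card_le_card hsub).trans card_le_two

lemma two_lt_degree_triangleMultiplier_inl [Fintype V] (ht : 0 < t) {u v : V} (huv : G.Adj v u) :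
    2 < (G.triangleMultiplier t).degree (inl v) := by
  have hsub : {inl u, inr (v, ⟨0, ht⟩, 0), inr (v, ⟨0, ht⟩, 1)} ⊆
      (G.triangleMultiplier t).neighborFinset (inl v) := by
    simp [insert_subset_iff, huv]
  rw [← card_neighborFinset_eq_degree]
  refine lt_of_lt_of_le ?_ (card_le_card hsub)
  rw [card_insert_of_notMem (by simp), card_pair (by simp)]
  norm_num

lemma sumCongr_prodShear_mem_autGroup {τ : Perm V} (hτ : τ ∈ G.autGroup)
    {ρ : V → Perm (Fin t × Fin 2)} (hρ : ∀ v, ρ v ∈ fiberPreserving (Fin t) (Fin 2)) :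
    τ.sumCongr (τ.prodShear ρ) ∈ (G.triangleMultiplier t).autGroup := by
  rintro (u | ⟨u, p⟩) (v | ⟨v, q⟩)
  · exact hτ u v
  · exact τ.injective.eq_iff
  · exact τ.injective.eq_iff
  · change τ u = τ v ∧ _ ↔ u = v ∧ _
    rw [τ.injective.eq_iff]
    refine and_congr_right fun huv => ?_
    subst huv
    exact mem_fiberPreserving_iff_fst_eq_and_snd_ne.1 (hρ u) p q

lemma mapsTo_range_inl_of_mem_autGroup [Fintype V] (ht : 0 < t) (hG : ∀ v, ∃ u, G.Adj v u)
    {σ : Perm (V ⊕ V × Fin t × Fin 2)} (hσ : σ ∈ (G.triangleMultiplier t).autGroup) :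
    Set.MapsTo σ (Set.range inl) (Set.range inl) := by
  rintro _ ⟨v, rfl⟩
  obtain ⟨u, huv⟩ := hG v
  rcases h : σ (inl v) with w | q
  · exact ⟨w, rfl⟩
  · have hdeg := degree_apply_of_mem_autGroup hσ (inl v)
    rw [h] at hdeg
    have := degree_triangleMultiplier_inr_le (G := G) q
    have := two_lt_degree_triangleMultiplier_inl ht huv
    omega

lemma exists_sumCongr_prodShear_eq_of_mem_autGroup [Fintype V] (ht : 0 < t)
    (hG : ∀ v, ∃ u, G.Adj v u) {σ : Perm (V ⊕ V × Fin t × Fin 2)}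
    (hσ : σ ∈ (G.triangleMultiplier t).autGroup) :
    ∃ τ ∈ G.autGroup, ∃ ρ : V → Perm (Fin t × Fin 2),
      (∀ v, ρ v ∈ fiberPreserving (Fin t) (Fin 2)) ∧ τ.sumCongr (τ.prodShear ρ) = σ := by
  obtain ⟨⟨τ, π⟩, rfl⟩ :=
    mem_sumCongrHom_range_of_perm_mapsTo_inl (mapsTo_range_inl_of_mem_autGroup ht hG hσ)
  obtain ⟨ρ, rfl⟩ := exists_prodShear_eq_of_fst_apply (σ := π) (τ := τ)
    fun q => Eq.symm ((hσ (inl q.1) (inr q)).2 rfl)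
  refine ⟨τ, fun u v => hσ (inl u) (inl v), ρ,
    fun v => mem_fiberPreserving_iff_fst_eq_and_snd_ne.2 fun p q => ?_, rfl⟩
  simpa using hσ (inr (v, p)) (inr (v, q))

noncomputable def autGroupTriangleMultiplierEquiv [Fintype V] (ht : 0 < t)
    (hG : ∀ v, ∃ u, G.Adj v u) :
    G.autGroup × (V → fiberPreserving (Fin t) (Fin 2)) ≃ (G.triangleMultiplier t).autGroup :=
  have : Nonempty (Fin t) := ⟨⟨0, ht⟩⟩
  Equiv.ofBijective
    (fun x => ⟨x.1.1.sumCongr (x.1.1.prodShear fun v => x.2 v),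
      sumCongr_prodShear_mem_autGroup x.1.2 fun v => (x.2 v).2⟩)
    ⟨fun x y h => by
      obtain ⟨hτ, hρ⟩ := sumCongr_prodShear_inj.1 (congrArg Subtype.val h)
      exact Prod.ext (Subtype.ext hτ) (funext fun v => Subtype.ext (congrFun hρ v)),
    fun σ => by
      obtain ⟨τ, hτ, ρ, hρ, h⟩ := exists_sumCongr_prodShear_eq_of_mem_autGroup ht hG σ.2
      exact ⟨(⟨τ, hτ⟩, fun v => ⟨ρ v, hρ v⟩), Subtype.ext h⟩⟩

variable (G t) in
def autGroupToTriangleMultiplier : G.autGroup →* (G.triangleMultiplier t).autGroup where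
  toFun τ := ⟨τ.1.sumCongr (τ.1.prodShear 1),
    sumCongr_prodShear_mem_autGroup τ.2 fun _ => one_mem _⟩
  map_one' := Subtype.ext <| Equiv.ext fun x => by rcases x with v | ⟨v, p⟩ <;> rfl
  map_mul' _ _ := Subtype.ext <| Equiv.ext fun x => by rcases x with v | ⟨v, p⟩ <;> rfl

lemma autGroupToTriangleMultiplier_injective :
    Function.Injective (autGroupToTriangleMultiplier G t) := fun _ _ h =>
  Subtype.ext <| Equiv.ext fun v => inl_injective (Equiv.congr_fun (congrArg Subtype.val h) (inl v))

end SimpleGraph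

theorem triangleMultiplier_aut_general {V : Type*} [Fintype V] (G : SimpleGraph V) (t : ℕ)
    (ht : 1 ≤ t) (hreg : G.IsRegularOfDegree (2 * t)) :
    (∃ f : G.autGroup →* (G.triangleMultiplier t).autGroup, Function.Injective f) ∧
    Nat.card (G.triangleMultiplier t).autGroup =
      (2 ^ t * Nat.factorial t) ^ Fintype.card V * Nat.card G.autGroup := by
  refine ⟨⟨_, SimpleGraph.autGroupToTriangleMultiplier_injective⟩, ?_⟩
  have hG (v : V) : ∃ u, G.Adj v u :=
    (G.degree_pos_iff_exists_adj v).1 (by rw [hreg.degree_eq]; omega)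
  rw [← Nat.card_congr (SimpleGraph.autGroupTriangleMultiplierEquiv ht hG), Nat.card_prod,
    Nat.card_fun, Equiv.Perm.card_fiberPreserving, Nat.card_eq_fintype_card (α := V)]
  simp [mul_comm]

/-- If `G` is a connected `(2t)`-regular graph with `t ≥ 1` on a finite vertex set `V`,
then `Aut(G)` embeds into `Aut(𝓜₃(G))` and
`|Aut(𝓜₃(G))| = (2^t · t!)^{|V|} · |Aut(G)|`. -/
theorem triangleMultiplier_aut {V : Type*} [Fintype V] (G : SimpleGraph V) (t : ℕ)
    (ht : 1 ≤ t) (hconn : G.Connected) (hreg : G.IsRegularOfDegree (2 * t)) :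
    (∃ f : G.autGroup →* (G.triangleMultiplier t).autGroup, Function.Injective f) ∧
    Nat.card (G.triangleMultiplier t).autGroup =
      (2 ^ t * Nat.factorial t) ^ Fintype.card V * Nat.card G.autGroup :=
  triangleMultiplier_aut_general G t ht hreg
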